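/- Chromatic particle codes are unique: for any two points x, y ∈ ℝ², code(x) = code(y) if and only if x and y induce the same weak ordering of distances to the generators, i.e., for all indices i, j, dist(x,p_i) ≤ dist(x,p_j) if and only if dist(y,p_i) ≤ dist(y,p_j). Hence two points belong to the same spatial particle exactly when their chromatic codes coincide. -/

import Mathlib

noncomputable section

open Metric

abbrev Pt : Type := EuclideanSpace ℝ (Fin 2)

/-- The chromatic code of a point `x` with respect to generators `p`:
`code p x i` = #{j ≠ i : dist(x,p j) > dist(x,p i)} + (1/2)·#{j ≠ i : dist(x,p j) = dist(x,p i)}. -/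
def code {n : ℕ} (p : Fin n → Pt) (x : Pt) (i : Fin n) : ℚ :=
  (Set.ncard {j : Fin n | j ≠ i ∧ dist x (p i) < dist x (p j)} : ℚ)
  + (1/2) * (Set.ncard {j : Fin n | j ≠ i ∧ dist x (p j) = dist x (p i)} : ℚ)

/-- `{i,j}` is a tie of `x`. -/
def Tie {n : ℕ} (p : Fin n → Pt) (x : Pt) (i j : Fin n) : Prop :=
  i ≠ j ∧ dist x (p i) = dist x (p j)

/-- A cell point has no ties. -/
def CellPoint {n : ℕ} (p : Fin n → Pt) (x : Pt) : Prop :=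
  ∀ i j, ¬ Tie p x i j

/-- An edge point has exactly one (unordered) tie. -/
def EdgePoint {n : ℕ} (p : Fin n → Pt) (x : Pt) : Prop :=
  ∃ i j, Tie p x i j ∧ ∀ u v, Tie p x u v → ({u, v} : Set (Fin n)) = {i, j}

/-- A 2-I vertex point has exactly two ties, forming two disjoint pairs. -/
def Vertex2I {n : ℕ} (p : Fin n → Pt) (x : Pt) : Prop :=
  ∃ i j u v : Fin n, i ≠ j ∧ i ≠ u ∧ i ≠ v ∧ j ≠ u ∧ j ≠ v ∧ u ≠ v ∧
    Tie p x i j ∧ Tie p x u v ∧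
    ∀ a b, Tie p x a b → ({a, b} : Set (Fin n)) = {i, j} ∨ ({a, b} : Set (Fin n)) = {u, v}

/-- A 3-I vertex point: its ties are exactly the three pairs contained in some
3-element subset `{i,j,k}`. -/
def Vertex3I {n : ℕ} (p : Fin n → Pt) (x : Pt) : Prop :=
  ∃ i j k : Fin n, i ≠ j ∧ i ≠ k ∧ j ≠ k ∧
    ∀ a b, Tie p x a b ↔
      (a ≠ b ∧ a ∈ ({i, j, k} : Set (Fin n)) ∧ b ∈ ({i, j, k} : Set (Fin n)))

/-- The chromatic distance between two points. -/
def chromDist {n : ℕ} (p : Fin n → Pt) (x y : Pt) : ℚ :=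
  ∑ i, |code p x i - code p y i|

/-- The spatial particle of `x`: the fiber of the chromatic code through `x`. -/
def particle {n : ℕ} (p : Fin n → Pt) (x : Pt) : Set Pt :=
  {y | code p y = code p x}

/-- The generators are in general position: every point of the plane is one of the four
particle types, and perpendicular bisectors of distinct pairs are distinct non-parallel
lines (any two of them meet in exactly one point). -/
def GeneralPosition {n : ℕ} (p : Fin n → Pt) : Prop :=
  (∀ x : Pt, CellPoint p x ∨ EdgePoint p x ∨ Vertex2I p x ∨ Vertex3I p x) ∧
  (∀ i j u v : Fin n, i ≠ j → u ≠ v → ({i, j} : Set (Fin n)) ≠ {u, v} →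
    ∃! x : Pt, dist x (p i) = dist x (p j) ∧ dist x (p u) = dist x (p v))

/-- The set `{0,1,…,n−1}` viewed inside `ℚ`. -/
def codeRange (n : ℕ) : Set ℚ := {q | ∃ m : ℕ, m < n ∧ q = m}

/-!
The code of `x` only involves the numbers `d i = dist x (p i)`: it is their (descending)
mid-rank, and `2 · code_i + 1 = #{j | d i < d j} + #{j | d i ≤ d j}`. Both counts are
antitone in `d i`, the first one strictly, so `d i ≤ d j ↔ code_j ≤ code_i`; the code therefore
determines the weak order of the distances, and conversely it is computed from that order.
-/

open Set

section MidRank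

variable {ι α : Type*} [LinearOrder α]

/-- Ties count for one half, so tied indices share the average of the ranks they occupy. -/
def midRank (f : ι → α) (i : ι) : ℚ :=
  ((ncard {j | j ≠ i ∧ f i < f j} : ℕ) : ℚ) + (1 / 2) * ((ncard {j | j ≠ i ∧ f j = f i} : ℕ) : ℚ)

theorem code_eq_midRank {n : ℕ} (p : Fin n → Pt) (x : Pt) :
    code p x = midRank (fun i => dist x (p i)) :=
  rfl

variable [Finite ι] (f : ι → α)

theorem two_mul_midRank_add_one (i : ι) :
    2 * midRank f i + 1 = ncard {j | f i < f j} + ncard {j | f i ≤ f j} := by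
  have hlt : {j | j ≠ i ∧ f i < f j} = {j | f i < f j} := by
    ext j
    exact ⟨And.right, fun h => ⟨fun hji => (hji ▸ h).false, h⟩⟩
  have heq : ncard {j | j ≠ i ∧ f j = f i} + 1 = ncard {j | f j = f i} := by
    have : {j | j ≠ i ∧ f j = f i} = {j | f j = f i} \ {i} := by
      ext j
      simp only [mem_ofPred_eq, mem_sdiff, mem_singleton_iff, and_comm]
    rw [this, ncard_sdiff_singleton_add_one (by simp)]
  have hle : ncard {j | f i ≤ f j} = ncard {j | f i < f j} + ncard {j | f j = f i} := by
    have hunion : {j | f i ≤ f j} = {j | f i < f j} ∪ {j | f j = f i} := by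
      ext j
      simp only [mem_ofPred_eq, mem_union, le_iff_lt_or_eq, eq_comm]
    rw [hunion, ncard_union_eq]
    exact disjoint_left.mpr fun j hlt heq => (heq ▸ hlt : f i < f i).false
  unfold midRank
  rw [hlt, hle, ← heq]
  push_cast
  ring

theorem midRank_lt_of_lt {i j : ι} (h : f i < f j) : midRank f j < midRank f i := by
  have hlt : (ncard {k | f j < f k} : ℚ) < ncard {k | f i < f k} := by
    exact_mod_cast ncard_lt_ncard
      ((ssubset_iff_of_subset fun k hk => h.trans hk).mpr ⟨j, h, lt_irrefl _⟩)
  have hle : (ncard {k | f j ≤ f k} : ℚ) ≤ ncard {k | f i ≤ f k} := by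
    exact_mod_cast ncard_le_ncard fun k hk => h.le.trans hk
  linarith [two_mul_midRank_add_one f i, two_mul_midRank_add_one f j]

theorem midRank_le_of_le {i j : ι} (h : f i ≤ f j) : midRank f j ≤ midRank f i := by
  rcases h.lt_or_eq with h | h
  · exact (midRank_lt_of_lt f h).le
  · have hi := two_mul_midRank_add_one f i
    rw [h] at hi
    linarith [two_mul_midRank_add_one f j]

theorem le_iff_midRank_le (i j : ι) : f i ≤ f j ↔ midRank f j ≤ midRank f i :=
  ⟨midRank_le_of_le f, fun h => not_lt.mp fun hji => (midRank_lt_of_lt f hji).not_ge h⟩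

end MidRank

theorem midRank_congr {ι α β : Type*} [LinearOrder α] [LinearOrder β] {f : ι → α} {g : ι → β}
    (h : ∀ i j, f i ≤ f j ↔ g i ≤ g j) : midRank f = midRank g := by
  have hlt : ∀ i j, f i < f j ↔ g i < g j := fun i j => by
    rw [lt_iff_not_ge, lt_iff_not_ge, h]
  have heq : ∀ i j, f i = f j ↔ g i = g j := fun i j => by
    rw [le_antisymm_iff, le_antisymm_iff, h, h]
  funext i
  simp only [midRank, hlt i, heq _ i]

theorem particle_codes_unique_general {n : ℕ} (p : Fin n → Pt) :
    ∀ x y : Pt, code p x = code p y ↔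
      ∀ i j, (dist x (p i) ≤ dist x (p j) ↔ dist y (p i) ≤ dist y (p j)) := by
  intro x y
  simp only [code_eq_midRank]
  refine ⟨fun h i j => ?_, midRank_congr⟩
  calc dist x (p i) ≤ dist x (p j)
      ↔ midRank (fun k => dist x (p k)) j ≤ midRank (fun k => dist x (p k)) i :=
        le_iff_midRank_le (fun k => dist x (p k)) i j
    _ ↔ dist y (p i) ≤ dist y (p j) := by
        rw [h]; exact (le_iff_midRank_le (fun k => dist y (p k)) i j).symm

/-- chromatic particle codes are unique: two points have the same chromatic
code if and only if they induce the same weak ordering of distances to the generators,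
i.e. they belong to the same spatial particle. -/
theorem particle_codes_unique {n : ℕ} (hn : 2 ≤ n) (p : Fin n → Pt)
    (hp : Function.Injective p) :
    ∀ x y : Pt, code p x = code p y ↔
      ∀ i j, (dist x (p i) ≤ dist x (p j) ↔ dist y (p i) ≤ dist y (p j)) :=
  particle_codes_unique_general p
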